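/- Given λ_+ > λ_− > 0, C > 0 and α ∈ (0,1), there exists a constant A > 1 such that the following holds: if (λ_n) and (λ̂_n) are sequences in [λ_−, λ_+] satisfying |λ_n − λ̂_n| < C·α^n for all n, then the affine compositions G_n = g_n ∘ ⋯ ∘ g_1 and Ĝ_n = ĝ_n ∘ ⋯ ∘ ĝ_1 satisfy 1/A ≤ |G_n'/Ĝ_n'| ≤ A for all n. -/

import Mathlib

noncomputable section

/-- The orbit of a starting value `w₀` under the non-autonomous dynamical system given by
the Möbius maps `f_{λ_n}(z) = λ_n/(1+z)`: `w_n = f_{λ_n}(w_{n-1})`. -/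
def orbit (lams : ℕ → ℝ) (w0 : ℂ) : ℕ → ℂ
  | 0 => w0
  | n + 1 => (lams (n + 1) : ℂ) / (1 + orbit lams w0 n)

/-- The affine map `g_n = φ_n ∘ f_{λ_n} ∘ φ_{n−1}⁻¹`, where `φ_n(z) = 1/(z − w_n)` is the
change of coordinates along the orbit `(w_n)`; explicitly
`g_n(ζ) = −(1 + (w_{n−1}+1)ζ)/w_n`. -/
def gmap (lams : ℕ → ℝ) (w0 : ℂ) (n : ℕ) (z : ℂ) : ℂ :=
  -(1 + (orbit lams w0 (n - 1) + 1) * z) / orbit lams w0 n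

/-- The composition `G_n = g_n ∘ ⋯ ∘ g_1` of the affine maps `g_i`. -/
def Gmap (lams : ℕ → ℝ) (w0 : ℂ) : ℕ → ℂ → ℂ
  | 0 => id
  | n + 1 => gmap lams w0 (n + 1) ∘ Gmap lams w0 n

/-!
`G_n' = ∏_{j<n} -(1 + w_j)/w_{j+1}`, so `‖G_n'/Ĝ_n'‖` is a product of the ratios
`‖1 + w_j‖/‖1 + ŵ_j‖` and `‖ŵ_{j+1}‖/‖w_{j+1}‖`. An orbit in the left half-plane has
`Re w_n < -1`, hence `1 ≤ ‖w_n‖ ≤ 1 + λ₊` and `‖1 + w_n‖ ≥ λ₋/(1 + λ₊)`, so each ratio is at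
most `exp` of a constant times `‖w_j - ŵ_j‖`, and it suffices to bound `∑ ‖w_n - ŵ_n‖` uniformly.
Going backwards, `(w_n - ŵ_n) w_{n+1} = (λ_{n+1} - λ̂_{n+1}) + (1 + ŵ_n)(ŵ_{n+1} - w_{n+1})` and
`‖1 + w‖ ≤ β ‖w‖` with `β = 1 - 1/(2(1 + λ₊)²) < 1`, so the distance relative to
`min ‖w_n‖ ‖ŵ_n‖` satisfies `ρ_n ≤ |λ_{n+1} - λ̂_{n+1}| + β ρ_{n+1}`. Summing over `n < N` and
using that `ρ` is bounded gives `(1 - β) ∑_{n<N} ρ_n ≤ C/(1 - α) + 2β(1 + λ₊)`.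
-/

open Finset

namespace Complex

lemma one_le_norm_of_re_le_neg_one {w : ℂ} (hw : w.re ≤ -1) : 1 ≤ ‖w‖ := by
  have := abs_re_le_norm w
  rw [abs_of_neg (by linarith)] at this
  linarith

lemma sq_norm_one_add_add_one_le {w : ℂ} (hw : w.re ≤ -1) : ‖1 + w‖ ^ 2 + 1 ≤ ‖w‖ ^ 2 := by
  simp only [Complex.sq_norm, normSq_apply, add_re, add_im, one_re, one_im]
  nlinarith

lemma norm_one_add_le_mul_norm {w : ℂ} {P : ℝ} (hw : w.re ≤ -1) (hP : ‖w‖ ≤ P) :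
    ‖1 + w‖ ≤ (1 - 1 / (2 * P ^ 2)) * ‖w‖ := by
  have h1 := one_le_norm_of_re_le_neg_one hw
  have hP0 : 0 < P := by linarith
  set s := 1 / P ^ 2 with hs
  have hus : ‖w‖ ^ 2 * s ≤ 1 := by
    rw [hs, mul_one_div, div_le_one (by positivity)]
    exact pow_le_pow_left₀ (by linarith) hP 2
  have hs0 : 0 ≤ s := by positivity
  have hβ : 1 - 1 / (2 * P ^ 2) = 1 - s / 2 := by rw [hs]; ring
  rw [hβ]
  have hβ0 : 0 ≤ 1 - s / 2 := by nlinarith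
  rw [← pow_le_pow_iff_left₀ (norm_nonneg _) (by positivity) two_ne_zero]
  nlinarith [sq_norm_one_add_add_one_le hw, sq_nonneg (‖w‖ * s)]

end Complex

lemma one_sub_mul_sum_range_le {ρ ε : ℕ → ℝ} {β B : ℝ} (hβ : 0 ≤ β)
    (hρ : ∀ n, ρ n ≤ ε n + β * ρ (n + 1)) (hρ0 : 0 ≤ ρ 0) (N : ℕ) (hB : ρ N ≤ B) :
    (1 - β) * ∑ n ∈ range N, ρ n ≤ ∑ n ∈ range N, ε n + β * B := by
  have h1 : ∑ n ∈ range N, ρ n ≤ ∑ n ∈ range N, ε n + β * ∑ n ∈ range N, ρ (n + 1) := by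
    rw [mul_sum, ← sum_add_distrib]
    exact sum_le_sum fun n _ => hρ n
  have hsucc := sum_range_succ ρ N
  have hsucc' := sum_range_succ' ρ N
  nlinarith

lemma sum_range_le_of_le_geometric {ε : ℕ → ℝ} {C α : ℝ} (hC : 0 ≤ C) (hα0 : 0 ≤ α)
    (hα1 : α < 1) (h : ∀ n, ε n ≤ C * α ^ n) (N : ℕ) :
    ∑ n ∈ range N, ε n ≤ C / (1 - α) :=
  calc ∑ n ∈ range N, ε n ≤ C * ∑ n ∈ Ico 0 N, α ^ n := by
        rw [mul_sum, ← range_eq_Ico]; exact sum_le_sum fun n _ => h n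
    _ ≤ C * (α ^ 0 / (1 - α)) := by gcongr; exact geom_sum_Ico_le_of_lt_one hα0 hα1
    _ = C / (1 - α) := by rw [pow_zero, mul_one_div]

lemma div_le_exp_div {x y d m : ℝ} (hm : 0 < m) (hmy : m ≤ y) (hd : 0 ≤ d) (hxy : x ≤ y + d) :
    x / y ≤ Real.exp (d / m) :=
  calc x / y ≤ 1 + d / m := by
        rw [div_le_iff₀ (hm.trans_le hmy), add_mul, one_mul]
        have : d ≤ d / m * y := by rw [div_mul_eq_mul_div, le_div_iff₀ hm]; gcongr
        linarith
    _ ≤ Real.exp (d / m) := by linarith [Real.add_one_le_exp (d / m)]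

lemma orbit_succ (lams : ℕ → ℝ) (w0 : ℂ) (n : ℕ) :
    orbit lams w0 (n + 1) = lams (n + 1) / (1 + orbit lams w0 n) :=
  rfl

structure IsLeftOrbit (lamm lamp : ℝ) (lams : ℕ → ℝ) (w0 : ℂ) : Prop where
  mem_Icc : ∀ n, 1 ≤ n → lams n ∈ Set.Icc lamm lamp
  re_neg : ∀ n, (orbit lams w0 n).re < 0

namespace IsLeftOrbit

variable {lamm lamp : ℝ} {lams : ℕ → ℝ} {w0 : ℂ}

lemma one_add_orbit_ne_zero (h : IsLeftOrbit lamm lamp lams w0) (n : ℕ) :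
    1 + orbit lams w0 n ≠ 0 := by
  intro h1
  have := h.re_neg (n + 1)
  simp [orbit_succ, h1] at this

lemma orbit_succ_mul (h : IsLeftOrbit lamm lamp lams w0) (n : ℕ) :
    orbit lams w0 (n + 1) * (1 + orbit lams w0 n) = lams (n + 1) := by
  rw [orbit_succ, div_mul_cancel₀ _ (h.one_add_orbit_ne_zero n)]

lemma lam_pos (h : IsLeftOrbit lamm lamp lams w0) (h0 : 0 < lamm) (n : ℕ) :
    0 < lams (n + 1) :=
  h0.trans_le (h.mem_Icc (n + 1) n.succ_pos).1

/-- `Re w_{n+1} = λ_{n+1} Re (1 + w_n) / |1 + w_n|²`, so `Re (1 + w_n) < 0`. -/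
lemma re_lt_neg_one (h : IsLeftOrbit lamm lamp lams w0) (h0 : 0 < lamm) (n : ℕ) :
    (orbit lams w0 n).re < -1 := by
  have hre := h.re_neg (n + 1)
  rw [orbit_succ, Complex.div_re] at hre
  simp only [Complex.ofReal_re, Complex.ofReal_im, zero_mul, zero_div, add_zero] at hre
  have hN := Complex.normSq_pos.2 (h.one_add_orbit_ne_zero n)
  have hlam := h.lam_pos h0 n
  have : (1 + orbit lams w0 n).re < 0 := by
    by_contra! hc
    exact hre.not_ge (by positivity)
  simpa [add_comm, lt_neg_iff_add_neg] using this

lemma one_le_norm (h : IsLeftOrbit lamm lamp lams w0) (h0 : 0 < lamm) (n : ℕ) :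
    1 ≤ ‖orbit lams w0 n‖ :=
  Complex.one_le_norm_of_re_le_neg_one (h.re_lt_neg_one h0 n).le

lemma orbit_ne_zero (h : IsLeftOrbit lamm lamp lams w0) (h0 : 0 < lamm) (n : ℕ) :
    orbit lams w0 n ≠ 0 :=
  norm_pos_iff.1 (one_pos.trans_le (h.one_le_norm h0 n))

lemma norm_orbit_succ_mul (h : IsLeftOrbit lamm lamp lams w0) (h0 : 0 < lamm) (n : ℕ) :
    ‖orbit lams w0 (n + 1)‖ * ‖1 + orbit lams w0 n‖ = lams (n + 1) := by
  rw [← norm_mul, h.orbit_succ_mul, Complex.norm_real, Real.norm_of_nonneg (h.lam_pos h0 n).le]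

lemma norm_one_add_le (h : IsLeftOrbit lamm lamp lams w0) (h0 : 0 < lamm) (n : ℕ) :
    ‖1 + orbit lams w0 n‖ ≤ lamp := by
  have h1 := h.norm_orbit_succ_mul h0 n
  have h2 := h.one_le_norm h0 (n + 1)
  have h3 := (h.mem_Icc (n + 1) n.succ_pos).2
  nlinarith [norm_nonneg (1 + orbit lams w0 n)]

lemma norm_le (h : IsLeftOrbit lamm lamp lams w0) (h0 : 0 < lamm) (n : ℕ) :
    ‖orbit lams w0 n‖ ≤ 1 + lamp :=
  calc ‖orbit lams w0 n‖ = ‖(1 + orbit lams w0 n) - 1‖ := by rw [add_sub_cancel_left]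
    _ ≤ ‖1 + orbit lams w0 n‖ + ‖(1 : ℂ)‖ := norm_sub_le _ _
    _ ≤ 1 + lamp := by rw [norm_one]; linarith [h.norm_one_add_le h0 n]

lemma le_norm_one_add (h : IsLeftOrbit lamm lamp lams w0) (h0 : 0 < lamm) (n : ℕ) :
    lamm / (1 + lamp) ≤ ‖1 + orbit lams w0 n‖ := by
  have h1 := h.norm_orbit_succ_mul h0 n
  have h2 := h.norm_le h0 (n + 1)
  have h3 := (h.mem_Icc (n + 1) n.succ_pos).1
  rw [div_le_iff₀ (by linarith [h.one_le_norm h0 (n + 1)])]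
  nlinarith [norm_nonneg (1 + orbit lams w0 n)]

lemma norm_one_add_le_mul_norm (h : IsLeftOrbit lamm lamp lams w0) (h0 : 0 < lamm) (n : ℕ) :
    ‖1 + orbit lams w0 n‖ ≤ (1 - 1 / (2 * (1 + lamp) ^ 2)) * ‖orbit lams w0 n‖ :=
  Complex.norm_one_add_le_mul_norm (h.re_lt_neg_one h0 n).le (h.norm_le h0 n)

end IsLeftOrbit

section TwoOrbits

variable {lamm lamp : ℝ} {lams lams' : ℕ → ℝ} {w0 w0' : ℂ}

lemma orbit_sub_mul_orbit_succ (n : ℕ) (hw : 1 + orbit lams w0 n ≠ 0)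
    (hw' : 1 + orbit lams' w0' n ≠ 0) :
    (orbit lams w0 n - orbit lams' w0' n) * orbit lams w0 (n + 1) =
      (lams (n + 1) - lams' (n + 1) : ℂ) +
        (1 + orbit lams' w0' n) * (orbit lams' w0' (n + 1) - orbit lams w0 (n + 1)) := by
  rw [orbit_succ, orbit_succ]
  field_simp
  ring

def orbitRelDist (lams lams' : ℕ → ℝ) (w0 w0' : ℂ) (n : ℕ) : ℝ :=
  max (‖orbit lams w0 n - orbit lams' w0' n‖ / ‖orbit lams w0 n‖)
    (‖orbit lams w0 n - orbit lams' w0' n‖ / ‖orbit lams' w0' n‖)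

lemma orbitRelDist_comm (n : ℕ) :
    orbitRelDist lams lams' w0 w0' n = orbitRelDist lams' lams w0' w0 n := by
  rw [orbitRelDist, orbitRelDist, max_comm, norm_sub_rev]

lemma orbitRelDist_nonneg (n : ℕ) : 0 ≤ orbitRelDist lams lams' w0 w0' n :=
  le_max_of_le_left (by positivity)

lemma norm_sub_orbit_div_le (h0 : 0 < lamm) (h : IsLeftOrbit lamm lamp lams w0)
    (h' : IsLeftOrbit lamm lamp lams' w0') (n : ℕ) :
    ‖orbit lams w0 n - orbit lams' w0' n‖ / ‖orbit lams' w0' n‖ ≤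
      |lams (n + 1) - lams' (n + 1)| +
        (1 - 1 / (2 * (1 + lamp) ^ 2)) * orbitRelDist lams lams' w0 w0' (n + 1) := by
  set β := 1 - 1 / (2 * (1 + lamp) ^ 2)
  set δ₀ := ‖orbit lams w0 n - orbit lams' w0' n‖
  set δ₁ := ‖orbit lams w0 (n + 1) - orbit lams' w0' (n + 1)‖
  set a := ‖orbit lams w0 (n + 1)‖
  set b := ‖orbit lams' w0' n‖
  set ε := |lams (n + 1) - lams' (n + 1)|
  have ha : 1 ≤ a := h.one_le_norm h0 (n + 1)
  have hb : 1 ≤ b := h'.one_le_norm h0 n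
  have hβ : 0 ≤ β := by
    have := h'.norm_one_add_le_mul_norm h0 n
    nlinarith [norm_nonneg (1 + orbit lams' w0' n)]
  have hstep : δ₀ * a ≤ ε + β * b * δ₁ :=
    calc δ₀ * a = ‖((lams (n + 1) - lams' (n + 1) : ℝ) : ℂ) +
          (1 + orbit lams' w0' n) * (orbit lams' w0' (n + 1) - orbit lams w0 (n + 1))‖ := by
          rw [← norm_mul, orbit_sub_mul_orbit_succ n (h.one_add_orbit_ne_zero n)
            (h'.one_add_orbit_ne_zero n), Complex.ofReal_sub]
      _ ≤ ε + ‖1 + orbit lams' w0' n‖ * δ₁ := by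
          refine (norm_add_le _ _).trans_eq ?_
          rw [norm_mul, norm_sub_rev, Complex.norm_real, Real.norm_eq_abs]
      _ ≤ ε + β * b * δ₁ := by
          gcongr
          exact h'.norm_one_add_le_mul_norm h0 n
  set ρ := orbitRelDist lams lams' w0 w0' (n + 1)
  have hδ₁ : δ₁ ≤ ρ * a := (div_le_iff₀ (by linarith)).1 (le_max_left _ _)
  have hε : ε ≤ ε * (b * a) :=
    le_mul_of_one_le_right (abs_nonneg _) (one_le_mul_of_one_le_of_one_le hb ha)
  have hβb : 0 ≤ β * b := by positivity
  rw [div_le_iff₀ (by linarith)]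
  refine le_of_mul_le_mul_right ?_ (by linarith : 0 < a)
  calc δ₀ * a ≤ ε * (b * a) + β * b * (ρ * a) := by
        linarith [mul_le_mul_of_nonneg_left hδ₁ hβb]
    _ = (ε + β * ρ) * b * a := by ring

lemma orbitRelDist_le (h0 : 0 < lamm) (h : IsLeftOrbit lamm lamp lams w0)
    (h' : IsLeftOrbit lamm lamp lams' w0') (n : ℕ) :
    orbitRelDist lams lams' w0 w0' n ≤
      |lams (n + 1) - lams' (n + 1)| +
        (1 - 1 / (2 * (1 + lamp) ^ 2)) * orbitRelDist lams lams' w0 w0' (n + 1) := by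
  refine max_le ?_ (norm_sub_orbit_div_le h0 h h' n)
  have := norm_sub_orbit_div_le h0 h' h n
  rwa [norm_sub_rev, abs_sub_comm, ← orbitRelDist_comm] at this

lemma orbitRelDist_le_two_mul (h0 : 0 < lamm) (h : IsLeftOrbit lamm lamp lams w0)
    (h' : IsLeftOrbit lamm lamp lams' w0') (n : ℕ) :
    orbitRelDist lams lams' w0 w0' n ≤ 2 * (1 + lamp) := by
  have hδ : ‖orbit lams w0 n - orbit lams' w0' n‖ ≤ 2 * (1 + lamp) := by
    linarith [norm_sub_le (orbit lams w0 n) (orbit lams' w0' n), h.norm_le h0 n, h'.norm_le h0 n]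
  exact max_le ((div_le_self (norm_nonneg _) (h.one_le_norm h0 n)).trans hδ)
    ((div_le_self (norm_nonneg _) (h'.one_le_norm h0 n)).trans hδ)

lemma norm_sub_orbit_le_mul_orbitRelDist (h0 : 0 < lamm) (h : IsLeftOrbit lamm lamp lams w0)
    (n : ℕ) :
    ‖orbit lams w0 n - orbit lams' w0' n‖ ≤ (1 + lamp) * orbitRelDist lams lams' w0 w0' n := by
  have hw := h.one_le_norm h0 n
  calc ‖orbit lams w0 n - orbit lams' w0' n‖
      = ‖orbit lams w0 n - orbit lams' w0' n‖ / ‖orbit lams w0 n‖ * ‖orbit lams w0 n‖ := by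
        field_simp
    _ ≤ orbitRelDist lams lams' w0 w0' n * (1 + lamp) :=
        mul_le_mul (le_max_left _ _) (h.norm_le h0 n) (by positivity) (orbitRelDist_nonneg n)
    _ = (1 + lamp) * orbitRelDist lams lams' w0 w0' n := mul_comm _ _

theorem exists_sum_norm_sub_orbit_le {C α : ℝ} (h0 : 0 < lamm) (hmp : lamm < lamp) (hC : 0 < C)
    (hα : α ∈ Set.Ioo (0 : ℝ) 1) :
    ∃ D > 0, ∀ (lams lams' : ℕ → ℝ) (w0 w0' : ℂ), IsLeftOrbit lamm lamp lams w0 →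
      IsLeftOrbit lamm lamp lams' w0' → (∀ n, 1 ≤ n → |lams n - lams' n| < C * α ^ n) →
      ∀ N, ∑ n ∈ range N, ‖orbit lams w0 n - orbit lams' w0' n‖ ≤ D := by
  set P := 1 + lamp
  set β := 1 - 1 / (2 * P ^ 2)
  have hP : 1 < P := by linarith
  have hβ0 : 0 ≤ β := by
    have : 1 / (2 * P ^ 2) ≤ 1 := by rw [div_le_one (by positivity)]; nlinarith
    linarith
  have hβ1 : 0 < 1 - β := by simp only [β, sub_sub_cancel]; positivity
  have hα0 := hα.1.le
  have hα1 : 0 < 1 - α := sub_pos.2 hα.2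
  refine ⟨P * ((C / (1 - α) + β * (2 * P)) / (1 - β)), by positivity, ?_⟩
  intro lams lams' w0 w0' h h' hdiff N
  have hε : ∀ n, |lams (n + 1) - lams' (n + 1)| ≤ C * α ^ n := fun n =>
    calc |lams (n + 1) - lams' (n + 1)| ≤ C * α ^ (n + 1) := (hdiff _ n.succ_pos).le
      _ ≤ C * α ^ n := mul_le_mul_of_nonneg_left (pow_le_pow_of_le_one hα0 hα.2.le n.le_succ) hC.le
  have hρ := one_sub_mul_sum_range_le hβ0 (orbitRelDist_le h0 h h') (orbitRelDist_nonneg 0) N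
    (orbitRelDist_le_two_mul h0 h h' N)
  have hsum := sum_range_le_of_le_geometric hC.le hα0 hα.2 hε N
  calc ∑ n ∈ range N, ‖orbit lams w0 n - orbit lams' w0' n‖
      ≤ ∑ n ∈ range N, P * orbitRelDist lams lams' w0 w0' n :=
        sum_le_sum fun n _ => norm_sub_orbit_le_mul_orbitRelDist h0 h n
    _ ≤ P * ((C / (1 - α) + β * (2 * P)) / (1 - β)) := by
        rw [← mul_sum]
        gcongr
        rw [le_div_iff₀ hβ1, mul_comm]
        linarith

end TwoOrbits

lemma hasDerivAt_Gmap (lams : ℕ → ℝ) (w0 : ℂ) (n : ℕ) (z : ℂ) :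
    HasDerivAt (Gmap lams w0 n)
      (∏ j ∈ range n, -(orbit lams w0 j + 1) / orbit lams w0 (j + 1)) z := by
  induction n generalizing z with
  | zero => simpa [Gmap] using hasDerivAt_id z
  | succ n ih =>
    have hg : HasDerivAt (gmap lams w0 (n + 1))
        (-(orbit lams w0 n + 1) / orbit lams w0 (n + 1)) (Gmap lams w0 n z) := by
      show HasDerivAt (fun x => -(1 + (orbit lams w0 n + 1) * x) / orbit lams w0 (n + 1)) _ _
      simpa using ((((hasDerivAt_id _).const_mul (orbit lams w0 n + 1)).const_add 1).neg.div_const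
          (orbit lams w0 (n + 1)))
    rw [prod_range_succ, mul_comm]
    exact hg.comp z (ih z)

section Derivatives

variable {lamm lamp : ℝ} {lams lams' : ℕ → ℝ} {w0 w0' : ℂ}

lemma deriv_Gmap_ne_zero (h0 : 0 < lamm) (h : IsLeftOrbit lamm lamp lams w0) (n : ℕ) :
    deriv (Gmap lams w0 n) 0 ≠ 0 := by
  rw [(hasDerivAt_Gmap lams w0 n 0).deriv, prod_ne_zero_iff]
  intro j _
  rw [add_comm]
  exact div_ne_zero (neg_ne_zero.2 (h.one_add_orbit_ne_zero j)) (h.orbit_ne_zero h0 (j + 1))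

lemma norm_deriv_Gmap_div_le {m : ℝ} (hm : 0 < m) (hm' : ∀ j, m ≤ ‖1 + orbit lams' w0' j‖)
    (hw : ∀ j, 1 ≤ ‖orbit lams w0 j‖) (n : ℕ) :
    ‖deriv (Gmap lams w0 n) 0 / deriv (Gmap lams' w0' n) 0‖ ≤
      Real.exp (∑ j ∈ range n, (‖orbit lams w0 j - orbit lams' w0' j‖ / m +
        ‖orbit lams w0 (j + 1) - orbit lams' w0' (j + 1)‖)) := by
  rw [(hasDerivAt_Gmap lams w0 n 0).deriv, (hasDerivAt_Gmap lams' w0' n 0).deriv,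
    ← prod_div_distrib, norm_prod, Real.exp_sum]
  refine prod_le_prod (fun j _ => norm_nonneg _) fun j _ => ?_
  have hfactor : ‖-(orbit lams w0 j + 1) / orbit lams w0 (j + 1) /
      (-(orbit lams' w0' j + 1) / orbit lams' w0' (j + 1))‖ =
      ‖1 + orbit lams w0 j‖ / ‖1 + orbit lams' w0' j‖ *
        (‖orbit lams' w0' (j + 1)‖ / ‖orbit lams w0 (j + 1)‖) := by
    simp only [norm_div, norm_neg, add_comm _ (1 : ℂ)]
    rw [div_div_div_eq, mul_comm ‖orbit lams w0 (j + 1)‖, ← div_mul_div_comm]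
  rw [hfactor, Real.exp_add]
  gcongr
  · refine div_le_exp_div hm (hm' j) (norm_nonneg _) ?_
    have := norm_sub_norm_le (1 + orbit lams w0 j) (1 + orbit lams' w0' j)
    rw [add_sub_add_left_eq_sub] at this
    linarith
  · rw [← div_one ‖orbit lams w0 (j + 1) - _‖]
    refine div_le_exp_div one_pos (hw (j + 1)) (norm_nonneg _) ?_
    linarith [norm_sub_norm_le (orbit lams' w0' (j + 1)) (orbit lams w0 (j + 1)),
      norm_sub_rev (orbit lams' w0' (j + 1)) (orbit lams w0 (j + 1))]

lemma norm_deriv_Gmap_div_le_exp {D : ℝ} (h0 : 0 < lamm) (h : IsLeftOrbit lamm lamp lams w0)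
    (h' : IsLeftOrbit lamm lamp lams' w0')
    (hD : ∀ N, ∑ n ∈ range N, ‖orbit lams w0 n - orbit lams' w0' n‖ ≤ D) (n : ℕ) :
    ‖deriv (Gmap lams w0 n) 0 / deriv (Gmap lams' w0' n) 0‖ ≤
      Real.exp (D / (lamm / (1 + lamp)) + D) := by
  have hm : 0 < lamm / (1 + lamp) :=
    div_pos h0 (by linarith [h.norm_one_add_le h0 0, norm_nonneg (1 + orbit lams w0 0)])
  refine (norm_deriv_Gmap_div_le hm (h'.le_norm_one_add h0) (h.one_le_norm h0) n).trans
    (Real.exp_le_exp.2 ?_)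
  rw [sum_add_distrib, ← sum_div]
  have hshift := sum_range_succ' (fun j => ‖orbit lams w0 j - orbit lams' w0' j‖) n
  gcongr
  · exact hD n
  · linarith [hD (n + 1), norm_nonneg (orbit lams w0 0 - orbit lams' w0' 0)]

end Derivatives

/-- **Corollary 3.5.** Given `λ₊ > λ₋ > 0`, `C > 0` and `α ∈ (0,1)` there
is `A > 1` such that for any sequences `(λ_n)`, `(λ̂_n)` in `[λ₋, λ₊]` with
`|λ_n − λ̂_n| < C·αⁿ` for all `n ≥ 1` (with associated orbits staying in the left
half-plane), the derivatives of the affine compositions `G_n`, `Ĝ_n` satisfy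
`1/A ≤ |G_n'/Ĝ_n'| ≤ A`. -/
theorem Gmap_deriv_ratio_bounded (lamm lamp C α : ℝ) (h0 : 0 < lamm) (hmp : lamm < lamp)
    (hC : 0 < C) (hα : α ∈ Set.Ioo (0 : ℝ) 1) :
    ∃ A : ℝ, 1 < A ∧ ∀ lams lams' : ℕ → ℝ,
      (∀ n : ℕ, 1 ≤ n → lams n ∈ Set.Icc lamm lamp) →
      (∀ n : ℕ, 1 ≤ n → lams' n ∈ Set.Icc lamm lamp) →
      (∀ n : ℕ, 1 ≤ n → |lams n - lams' n| < C * α ^ n) →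
      ∀ w0 w0' : ℂ,
        (∀ n : ℕ, (orbit lams w0 n).re < 0) →
        (∀ n : ℕ, (orbit lams' w0' n).re < 0) →
        ∀ n : ℕ,
          1 / A ≤ ‖deriv (Gmap lams w0 n) 0 / deriv (Gmap lams' w0' n) 0‖ ∧
          ‖deriv (Gmap lams w0 n) 0 / deriv (Gmap lams' w0' n) 0‖ ≤ A := by
  obtain ⟨D, hD, hsum⟩ := exists_sum_norm_sub_orbit_le h0 hmp hC hα
  have hm : 0 < lamm / (1 + lamp) := div_pos h0 (by linarith)
  refine ⟨Real.exp (D / (lamm / (1 + lamp)) + D), Real.one_lt_exp_iff.2 (by positivity), ?_⟩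
  intro lams lams' hlam hlam' hdiff w0 w0' hre hre' n
  have h : IsLeftOrbit lamm lamp lams w0 := ⟨hlam, hre⟩
  have h' : IsLeftOrbit lamm lamp lams' w0' := ⟨hlam', hre'⟩
  have hdiff' : ∀ n, 1 ≤ n → |lams' n - lams n| < C * α ^ n := fun n hn =>
    abs_sub_comm (lams n) (lams' n) ▸ hdiff n hn
  have hle := norm_deriv_Gmap_div_le_exp h0 h h' (hsum _ _ _ _ h h' hdiff) n
  have hge := norm_deriv_Gmap_div_le_exp h0 h' h (hsum _ _ _ _ h' h hdiff') n
  refine ⟨?_, hle⟩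
  rw [norm_div] at hge ⊢
  rw [← one_div_div ‖deriv (Gmap lams' w0' n) 0‖]
  exact one_div_le_one_div_of_le (div_pos (norm_pos_iff.2 (deriv_Gmap_ne_zero h0 h' n))
    (norm_pos_iff.2 (deriv_Gmap_ne_zero h0 h n))) hge

end
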